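/- arXiv:1212.0455 — 5 statements merged into one kernel-verified Lean document; each statement's English description precedes it below -/
import Mathlib

section
/- Let Ω be an open subset of ℂᵐ, let ε > 0, and let φ₁,…,φₙ : Ω → ℂ be bounded holomorphic functions satisfying ∑_{i=1}^n |φᵢ(ω)|² ≥ ε² for every ω ∈ Ω. For ω ∈ Ω let P(ω) be the n×n complex matrix with entries P(ω)_{ij} = φᵢ(ω)·conj(φⱼ(ω)) / ∑_{k=1}^n |φₖ(ω)|² (the orthogonal projection of ℂⁿ onto the line spanned by (φ₁(ω),…,φₙ(ω))). Then the following are equivalent: (1) there exist bounded holomorphic functions ψ₁,…,ψₙ : Ω → ℂ with ∑_{i=1}^n φᵢ(ω)ψᵢ(ω) = 1 for every ω ∈ Ω; (6) there exists a function V : Ω → M_n(ℂ) such that (a) every entry of E(ω) := P(ω) + V(ω) is a bounded holomorphic function on Ω, and (b) V(ω) = P(ω) V(ω) (I_n − P(ω)) for every ω ∈ Ω. -/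
/-!
Pointwise this is linear algebra. For an idempotent `P`, the relation `V = P V (I - P)` says
exactly that `E = P + V` satisfies `P E = E` and `E P = P`; when `P` is the orthogonal projection
onto the line through `φ(ω)`, these two identities say that `E = φ ψᵀ` for a vector `ψ` with
`ψᵀ φ = 1`. So corona solutions `ψ` and corrections `V` correspond through `E = φ ψᵀ`.

Holomorphy and boundedness pass from `φ, ψ` to `E` by taking products. Conversely,
`ψⱼ = Eᵢⱼ / φᵢ` near any point where `φᵢ ≠ 0`, so `ψ` is holomorphic, and
`ε ‖ψⱼ‖ ≤ ‖φ‖ ‖ψⱼ‖ = ‖(Eᵢⱼ)ᵢ‖` bounds it.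
-/

/-- The pointwise orthogonal projection matrix `P(ω)` of `ℂⁿ` onto the line spanned by
`(φ₁(ω), …, φₙ(ω))`, with entries `P(ω)ᵢⱼ = φᵢ(ω) conj(φⱼ(ω)) / ∑ₖ |φₖ(ω)|²`. -/
noncomputable def projMat {m n : ℕ} (φ : Fin n → (Fin m → ℂ) → ℂ) (ω : Fin m → ℂ) :
    Matrix (Fin n) (Fin n) ℂ :=
  fun i j => φ i ω * (starRingEnd ℂ) (φ j ω) / ((∑ k, ‖φ k ω‖ ^ 2 : ℝ) : ℂ)

theorem IsIdempotentElem.eq_mul_mul_one_sub_iff {R : Type*} [Ring R] {p v : R}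
    (hp : IsIdempotentElem p) :
    v = p * v * (1 - p) ↔ p * (p + v) = p + v ∧ (p + v) * p = p := by
  rw [mul_add, add_mul, hp.eq, add_right_inj, add_eq_left]
  constructor
  · intro hv
    constructor
    · rw [hv, ← mul_assoc, ← mul_assoc, hp.eq]
    · rw [hv, mul_assoc, sub_mul, one_mul, hp.eq, sub_self, mul_zero]
  · rintro ⟨hpv, hvp⟩
    rw [hpv, mul_sub, mul_one, hvp, sub_zero]

namespace Matrix

variable {ι K : Type*} [Fintype ι] [Field K] [Star K]

def lineProj (u : ι → K) : Matrix ι ι K := (star u ⬝ᵥ u)⁻¹ • vecMulVec u (star u)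

variable {u : ι → K}

theorem lineProj_eq_vecMulVec (u : ι → K) :
    lineProj u = vecMulVec u ((star u ⬝ᵥ u)⁻¹ • star u) := by
  rw [lineProj, vecMulVec_smul]

theorem lineProj_mul_vecMulVec (hu : star u ⬝ᵥ u ≠ 0) (w : ι → K) :
    lineProj u * vecMulVec u w = vecMulVec u w := by
  rw [lineProj, smul_mul, vecMulVec_mul_vecMulVec, vecMulVec_smul, smul_smul,
    inv_mul_cancel₀ hu, one_smul]

theorem vecMulVec_mul_lineProj {w : ι → K} (hw : w ⬝ᵥ u = 1) :
    vecMulVec u w * lineProj u = lineProj u := by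
  rw [lineProj, mul_smul_comm, vecMulVec_mul_vecMulVec, hw, one_smul]

theorem isIdempotentElem_lineProj (hu : star u ⬝ᵥ u ≠ 0) : IsIdempotentElem (lineProj u) := by
  have h := lineProj_mul_vecMulVec hu ((star u ⬝ᵥ u)⁻¹ • star u)
  rwa [← lineProj_eq_vecMulVec] at h

theorem lineProj_mulVec_self (hu : star u ⬝ᵥ u ≠ 0) : lineProj u *ᵥ u = u := by
  rw [lineProj, smul_mulVec, vecMulVec_mulVec, op_smul_eq_smul, smul_smul, inv_mul_cancel₀ hu,
    one_smul]

theorem lineProj_mul_eq_and_mul_lineProj_eq_iff (hu : star u ⬝ᵥ u ≠ 0) {E : Matrix ι ι K} :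
    lineProj u * E = E ∧ E * lineProj u = lineProj u ↔
      ∃ w, vecMulVec u w = E ∧ u ⬝ᵥ w = 1 := by
  constructor
  · rintro ⟨hPE, hEP⟩
    refine ⟨(star u ⬝ᵥ u)⁻¹ • (star u ᵥ* E), ?_, ?_⟩
    · rw [vecMulVec_smul, ← vecMulVec_mul, ← smul_mul, ← lineProj, hPE]
    · have hEu : E *ᵥ u = u := by
        rw [← lineProj_mulVec_self hu, mulVec_mulVec, hEP]
      rw [dotProduct_smul, dotProduct_comm u, ← dotProduct_mulVec, hEu, smul_eq_mul,
        inv_mul_cancel₀ hu]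
  · rintro ⟨w, rfl, hw⟩
    exact ⟨lineProj_mul_vecMulVec hu w, vecMulVec_mul_lineProj (by rwa [dotProduct_comm])⟩

theorem eq_lineProj_mul_mul_one_sub_lineProj_iff [DecidableEq ι] (hu : star u ⬝ᵥ u ≠ 0)
    (V : Matrix ι ι K) :
    V = lineProj u * V * (1 - lineProj u) ↔
      ∃ w, vecMulVec u w = lineProj u + V ∧ u ⬝ᵥ w = 1 := by
  rw [(isIdempotentElem_lineProj hu).eq_mul_mul_one_sub_iff,
    lineProj_mul_eq_and_mul_lineProj_eq_iff hu]

end Matrix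

open Matrix Topology

theorem star_dotProduct_self_eq_sum_norm_sq {ι 𝕜 : Type*} [Fintype ι] [RCLike 𝕜] (u : ι → 𝕜) :
    star u ⬝ᵥ u = ((∑ i, ‖u i‖ ^ 2 : ℝ) : 𝕜) := by
  push_cast
  exact Finset.sum_congr rfl fun i _ => RCLike.conj_mul (u i)

theorem projMat_eq_lineProj {m n : ℕ} (φ : Fin n → (Fin m → ℂ) → ℂ) (ω : Fin m → ℂ) :
    projMat φ ω = lineProj fun i => φ i ω := by
  ext i j
  rw [lineProj, star_dotProduct_self_eq_sum_norm_sq, Matrix.smul_apply, vecMulVec_apply,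
    smul_eq_mul, projMat, div_eq_inv_mul]
  rfl

theorem differentiableOn_of_forall_mul_eq {𝕜 E ι : Type*} [NontriviallyNormedField 𝕜]
    [NormedAddCommGroup E] [NormedSpace 𝕜 E] {U : Set E} (hU : IsOpen U) {g f : ι → E → 𝕜}
    {h : E → 𝕜} (hg : ∀ i, DifferentiableOn 𝕜 (g i) U) (hf : ∀ i, DifferentiableOn 𝕜 (f i) U)
    (hgh : ∀ i, ∀ x ∈ U, g i x * h x = f i x) (hne : ∀ x ∈ U, ∃ i, g i x ≠ 0) :
    DifferentiableOn 𝕜 h U := by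
  intro x hx
  obtain ⟨i, hi⟩ := hne x hx
  have hquot : DifferentiableAt 𝕜 (f i * (g i)⁻¹) x :=
    ((hf i).differentiableAt (hU.mem_nhds hx)).mul
      (((hg i).differentiableAt (hU.mem_nhds hx)).inv hi)
  have heq : f i * (g i)⁻¹ =ᶠ[𝓝 x] h := by
    filter_upwards [hU.mem_nhds hx,
      ((hg i).continuousOn.continuousAt (hU.mem_nhds hx)).eventually_ne hi] with y hy hgy
    rw [Pi.mul_apply, Pi.inv_apply, ← hgh i y hy, mul_comm, inv_mul_cancel_left₀ hgy]
  exact (hquot.congr_of_eventuallyEq heq.symm).differentiableWithinAt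

theorem norm_le_of_forall_norm_mul_le {𝕜 ι : Type*} [NormedDivisionRing 𝕜] [Fintype ι]
    {a : ι → 𝕜} {b : 𝕜} {ε : ℝ} (hε : 0 < ε) (ha : ε ^ 2 ≤ ∑ i, ‖a i‖ ^ 2) {C : ι → ℝ}
    (hC : ∀ i, ‖a i * b‖ ≤ C i) : ‖b‖ ≤ √(∑ i, C i ^ 2) / ε := by
  rw [le_div_iff₀ hε, mul_comm]
  refine Real.le_sqrt_of_sq_le ?_
  calc (ε * ‖b‖) ^ 2 = ε ^ 2 * ‖b‖ ^ 2 := mul_pow _ _ _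
    _ ≤ (∑ i, ‖a i‖ ^ 2) * ‖b‖ ^ 2 := by gcongr
    _ = ∑ i, ‖a i * b‖ ^ 2 := by simp only [Finset.sum_mul, norm_mul, mul_pow]
    _ ≤ ∑ i, C i ^ 2 :=
      Finset.sum_le_sum fun i _ => pow_le_pow_left₀ (norm_nonneg _) (hC i) 2

/-- Nikolski's lemma, Treil–Wick form.  For corona data
`φ₁,…,φₙ ∈ H^∞(Ω)` with `∑ |φᵢ(ω)|² ≥ ε² > 0` on `Ω`, the corona problem is solvable iff
the projection `P(ω)` can be corrected by an off-diagonal term `V(ω)` (i.e.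
`V = P V (I − P)`) so that `E = P + V` has bounded holomorphic entries on `Ω`. -/
theorem corona_iff_nikolski {m n : ℕ} (Ω : Set (Fin m → ℂ)) (hΩ : IsOpen Ω)
    (ε : ℝ) (hε : 0 < ε) (φ : Fin n → (Fin m → ℂ) → ℂ)
    (hφhol : ∀ i, DifferentiableOn ℂ (φ i) Ω)
    (hφbdd : ∀ i, ∃ C : ℝ, ∀ ω ∈ Ω, ‖φ i ω‖ ≤ C)
    (hlow : ∀ ω ∈ Ω, ε ^ 2 ≤ ∑ i, ‖φ i ω‖ ^ 2) :
    -- (1): a bounded holomorphic corona solution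
    (∃ ψ : Fin n → (Fin m → ℂ) → ℂ,
        (∀ i, DifferentiableOn ℂ (ψ i) Ω) ∧
        (∀ i, ∃ C : ℝ, ∀ ω ∈ Ω, ‖ψ i ω‖ ≤ C) ∧
        ∀ ω ∈ Ω, ∑ i, φ i ω * ψ i ω = 1) ↔
    -- (6): a correction V of P to a bounded holomorphic idempotent-valued E = P + V
    (∃ V : (Fin m → ℂ) → Matrix (Fin n) (Fin n) ℂ,
        (∀ i j, DifferentiableOn ℂ (fun ω => projMat φ ω i j + V ω i j) Ω) ∧
        (∀ i j, ∃ C : ℝ, ∀ ω ∈ Ω, ‖projMat φ ω i j + V ω i j‖ ≤ C) ∧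
        ∀ ω ∈ Ω, V ω = projMat φ ω * V ω * (1 - projMat φ ω)) := by
  have hpos : ∀ ω ∈ Ω, 0 < ∑ i, ‖φ i ω‖ ^ 2 := fun ω hω => (pow_pos hε 2).trans_le (hlow ω hω)
  have hne : ∀ ω ∈ Ω, ∃ i, φ i ω ≠ 0 := fun ω hω => by
    obtain ⟨i, -, hi⟩ := Finset.exists_ne_zero_of_sum_ne_zero (hpos ω hω).ne'
    exact ⟨i, by simpa using hi⟩
  have hu : ∀ ω ∈ Ω, (star fun i => φ i ω) ⬝ᵥ (fun i => φ i ω) ≠ 0 := fun ω hω => by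
    rw [star_dotProduct_self_eq_sum_norm_sq]
    exact Complex.ofReal_ne_zero.2 (hpos ω hω).ne'
  simp only [projMat_eq_lineProj]
  constructor
  · rintro ⟨ψ, hψhol, hψbdd, hψφ⟩
    refine ⟨fun ω => vecMulVec (fun i => φ i ω) (fun j => ψ j ω) - lineProj fun i => φ i ω,
      fun i j => ?_, fun i j => ?_, fun ω hω => ?_⟩
    · simpa only [Matrix.sub_apply, add_sub_cancel, vecMulVec_apply] using
        (hφhol i).fun_mul (hψhol j)
    · obtain ⟨C, hC⟩ := hφbdd i
      obtain ⟨D, hD⟩ := hψbdd j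
      refine ⟨C * D, fun ω hω => ?_⟩
      simp only [Matrix.sub_apply, add_sub_cancel, vecMulVec_apply, norm_mul]
      exact mul_le_mul (hC ω hω) (hD ω hω) (norm_nonneg _) ((norm_nonneg _).trans (hC ω hω))
    · exact (eq_lineProj_mul_mul_one_sub_lineProj_iff (hu ω hω) _).2
        ⟨_, (add_sub_cancel _ _).symm, hψφ ω hω⟩
  · rintro ⟨V, hEhol, hEbdd, hV⟩
    choose! ψ hψ using fun ω hω =>
      (eq_lineProj_mul_mul_one_sub_lineProj_iff (hu ω hω) _).1 (hV ω hω)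
    have hφψ : ∀ ω ∈ Ω, ∀ i j, φ i ω * ψ ω j = (lineProj (fun i => φ i ω) + V ω) i j :=
      fun ω hω i j => by rw [← (hψ ω hω).1, vecMulVec_apply]
    refine ⟨fun j ω => ψ ω j, fun j => ?_, fun j => ?_, fun ω hω => (hψ ω hω).2⟩
    · exact differentiableOn_of_forall_mul_eq hΩ hφhol (fun i => hEhol i j)
        (fun i ω hω => hφψ ω hω i j) hne
    · choose C hC using fun i => hEbdd i j
      exact ⟨√(∑ i, C i ^ 2) / ε, fun ω hω => norm_le_of_forall_norm_mul_le hε (hlow ω hω)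
        fun i => (hφψ ω hω i j).symm ▸ hC i ω hω⟩
end

section
/- Let H be a complex Hilbert space and let A be a commutative unital subalgebra of the bounded linear operators on H. Assume: (I) for every k ≥ 1, every bounded linear operator X : H → Hᵏ satisfying a⁽ᵏ⁾ ∘ X = X ∘ a for all a ∈ A is of the form X f = (a₁f, …, a_k f) for some a₁,…,a_k ∈ A; and (II) (the commutant lifting property, in the special case needed) for every n ≥ 1, every closed subspace S of Hⁿ invariant under a⁽ⁿ⁾ for all a ∈ A, and every bounded linear operator X : H → Hⁿ/S satisfying X ∘ a = ā ∘ X for all a ∈ A (where ā is the operator induced by a⁽ⁿ⁾ on the quotient Banach space Hⁿ/S, and π_S : Hⁿ → Hⁿ/S is the quotient map), there exists a bounded linear operator X̄ : H → Hⁿ with a⁽ⁿ⁾ ∘ X̄ = X̄ ∘ a for all a ∈ A, π_S ∘ X̄ = X, and ‖X̄‖ = ‖X‖. Then for any T₁,…,Tₙ ∈ A such that the operator N : Hⁿ → H, N(f₁,…,fₙ) = ∑_{i=1}^n Tᵢ fᵢ, is surjective, there exist S₁,…,Sₙ ∈ A with ∑_{i=1}^n Tᵢ Sᵢ = id_H.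 -/
/-!
The row operator `N = (T₁ ⋯ Tₙ) : Hⁿ → H` is a module map, so its kernel `K` is an invariant
subspace, and by the open mapping theorem `N` induces a module isomorphism `Hⁿ/K ≅ H`. Its
inverse `X : H → Hⁿ/K` is a module map; commutant lifting gives a module map `Y : H → Hⁿ` with
`π_K ∘ Y = X`, hence `N ∘ Y = id`, and by (I) the coordinates of `Y` are multipliers `Sᵢ ∈ A`.
-/

/-- The diagonal (ampliation) action `a⁽ᵏ⁾` of an operator `a` on
`Hᵏ = PiLp 2 (fun _ : Fin k => H)`, acting as `a` in each coordinate. -/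
noncomputable def diagOp {H : Type*} [NormedAddCommGroup H] [NormedSpace ℂ H] {k : ℕ}
    (a : H →L[ℂ] H) (v : PiLp 2 (fun _ : Fin k => H)) : PiLp 2 (fun _ : Fin k => H) :=
  WithLp.toLp 2 (fun i => a (v i))

open Function

namespace ContinuousLinearMap

variable {𝕜 E F : Type*} [NontriviallyNormedField 𝕜] [NormedAddCommGroup E] [NormedSpace 𝕜 E]
  [CompleteSpace E] [NormedAddCommGroup F] [NormedSpace 𝕜 F] [CompleteSpace F]

noncomputable def quotKerEquivOfSurjective (N : E →L[𝕜] F) (hN : Surjective N) :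
    (E ⧸ N.toLinearMap.ker) ≃L[𝕜] F :=
  haveI : IsClosed (N.toLinearMap.ker : Set E) := N.isClosed_ker
  ContinuousLinearEquiv.ofBijective (Submodule.liftQL _ N le_rfl)
    (Submodule.ker_liftQ_eq_bot _ _ _ le_rfl)
    (by rw [Submodule.toLinearMap_liftQL, Submodule.range_liftQ, LinearMap.range_eq_top]; exact hN)

variable {N : E →L[𝕜] F} {hN : Surjective N}

@[simp]
theorem quotKerEquivOfSurjective_mk (v : E) :
    N.quotKerEquivOfSurjective hN (Submodule.Quotient.mk v) = N v :=
  rfl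

theorem quotKerEquivOfSurjective_symm_eq_mk_iff {f : F} {v : E} :
    (N.quotKerEquivOfSurjective hN).symm f = Submodule.Quotient.mk v ↔ N v = f := by
  rw [ContinuousLinearEquiv.symm_apply_eq, quotKerEquivOfSurjective_mk, eq_comm]

theorem quotKerEquivOfSurjective_symm_apply_of_intertwines {a : F → F} {D : E → E}
    (hD : ∀ v, N (D v) = a (N v)) {f : F} {v : E}
    (hv : Submodule.Quotient.mk v = (N.quotKerEquivOfSurjective hN).symm f) :
    (N.quotKerEquivOfSurjective hN).symm (a f) = Submodule.Quotient.mk (D v) := by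
  rw [quotKerEquivOfSurjective_symm_eq_mk_iff, hD,
    quotKerEquivOfSurjective_symm_eq_mk_iff.1 hv.symm]

end ContinuousLinearMap

section RowOperator

variable {𝕜 ι E F : Type*} [NontriviallyNormedField 𝕜] [Fintype ι] [NormedAddCommGroup E]
  [NormedSpace 𝕜 E] [NormedAddCommGroup F] [NormedSpace 𝕜 F]

noncomputable def rowOp (T : ι → E →L[𝕜] F) : PiLp 2 (fun _ : ι => E) →L[𝕜] F :=
  ∑ i, (T i).comp (PiLp.proj 2 (fun _ : ι => E) i)

@[simp]
theorem rowOp_apply (T : ι → E →L[𝕜] F) (v : PiLp 2 (fun _ : ι => E)) :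
    rowOp T v = ∑ i, T i (v i) := by
  simp [rowOp]

end RowOperator

theorem rowOp_diagOp {H : Type*} [NormedAddCommGroup H] [NormedSpace ℂ H] {n : ℕ}
    {T : Fin n → H →L[ℂ] H} {a : H →L[ℂ] H} (ha : ∀ i, Commute a (T i))
    (v : PiLp 2 (fun _ : Fin n => H)) : rowOp T (diagOp a v) = a (rowOp T v) := by
  simp only [rowOp_apply, diagOp, map_sum]
  exact Finset.sum_congr rfl fun i _ => (congrArg (· (v i)) (ha i)).symm

/-- Theorem 6.3 of the paper.  Let `A` be a commutative unital algebra of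
operators on a Hilbert space `H` such that (I) every module map `H → Hᵏ` is a column of
elements of `A`, and (II) `A` has the commutant lifting property.  If `T₁,…,Tₙ ∈ A` are
such that the row operator `N(f₁,…,fₙ) = ∑ Tᵢ fᵢ` is surjective, then there exist
`S₁,…,Sₙ ∈ A` with `∑ Tᵢ Sᵢ = id`. -/
theorem clt_toeplitz_corona {H : Type*} [NormedAddCommGroup H] [InnerProductSpace ℂ H]
    [CompleteSpace H] (A : Subalgebra ℂ (H →L[ℂ] H))
    (hcomm : ∀ a ∈ A, ∀ b ∈ A, a * b = b * a)
    -- (I): module maps H → Hᵏ are columns of multipliers (Lemma 3.4)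
    (hI : ∀ k : ℕ, 1 ≤ k → ∀ X : H →L[ℂ] PiLp 2 (fun _ : Fin k => H),
        (∀ a ∈ A, ∀ f : H, X (a f) = diagOp a (X f)) →
        ∃ c : Fin k → H →L[ℂ] H, (∀ i, c i ∈ A) ∧ ∀ (f : H) (i : Fin k), X f i = c i f)
    -- (II): the commutant lifting (CLT) property (Definition 6.2, special case needed)
    (hII : ∀ k : ℕ, 1 ≤ k → ∀ S : Submodule ℂ (PiLp 2 (fun _ : Fin k => H)),
        IsClosed (S : Set (PiLp 2 (fun _ : Fin k => H))) →
        (∀ a ∈ A, ∀ v ∈ S, diagOp a v ∈ S) →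
        ∀ X : H →L[ℂ] (PiLp 2 (fun _ : Fin k => H) ⧸ S),
        (∀ a ∈ A, ∀ f : H, ∀ v : PiLp 2 (fun _ : Fin k => H),
            Submodule.Quotient.mk v = X f → X (a f) = Submodule.Quotient.mk (diagOp a v)) →
        ∃ Y : H →L[ℂ] PiLp 2 (fun _ : Fin k => H),
          (∀ a ∈ A, ∀ f : H, Y (a f) = diagOp a (Y f)) ∧
          (∀ f : H, S.mkQ (Y f) = X f) ∧ ‖Y‖ = ‖X‖)
    {n : ℕ} (hn : 1 ≤ n) (T : Fin n → H →L[ℂ] H) (hT : ∀ i, T i ∈ A)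
    (hsurj : Function.Surjective (fun v : PiLp 2 (fun _ : Fin n => H) => ∑ i, T i (v i))) :
    ∃ S : Fin n → H →L[ℂ] H, (∀ i, S i ∈ A) ∧ ∀ f : H, ∑ i, T i (S i f) = f := by
  have hNa : ∀ a ∈ A, ∀ v, rowOp T (diagOp a v) = a (rowOp T v) := fun a ha =>
    rowOp_diagOp fun i => hcomm a ha (T i) (hT i)
  have hN : Surjective (rowOp T) := by simpa only [← rowOp_apply] using hsurj
  set K := (rowOp T).toLinearMap.ker
  have hK : ∀ a ∈ A, ∀ v ∈ K, diagOp a v ∈ K := by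
    intro a ha v hv
    simp only [K, LinearMap.mem_ker, ContinuousLinearMap.coe_coe] at hv ⊢
    rw [hNa a ha, hv, map_zero]
  set X := ((rowOp T).quotKerEquivOfSurjective hN).symm
  obtain ⟨Y, hYA, hYX, -⟩ := hII n hn K (rowOp T).isClosed_ker hK X.toContinuousLinearMap
    fun a ha _ _ hv => ContinuousLinearMap.quotKerEquivOfSurjective_symm_apply_of_intertwines
      (hNa a ha) hv
  obtain ⟨S, hSA, hYS⟩ := hI n hn Y hYA
  refine ⟨S, hSA, fun f => ?_⟩
  have hNY : rowOp T (Y f) = f :=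
    ContinuousLinearMap.quotKerEquivOfSurjective_symm_eq_mk_iff.1 (hYX f).symm
  simpa only [rowOp_apply, hYS] using hNY
end

section
/- Let Ω be a nonempty open subset of ℂᵐ, let n ≥ 1, and let φ₁,…,φₙ : Ω → ℂ be bounded holomorphic functions; write Φ(ω) = (φ₁(ω),…,φₙ(ω)) ∈ ℂⁿ. If the origin 0 ∈ ℂⁿ does not belong to the polynomial convex hull Pol(Φ(Ω)) of the (bounded) set Φ(Ω) = {Φ(ω) : ω ∈ Ω}, then there exist bounded holomorphic functions ψ₁,…,ψₙ : Ω → ℂ such that ∑_{i=1}^n φᵢ(ω)ψᵢ(ω) = 1 for every ω ∈ Ω. -/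
/-!
If `0 ∉ Pol(Φ(Ω))`, some polynomial `p` satisfies `sup_{Φ(Ω)} |p| < |p(0)|`. Its non-constant
part `p - p(0) = ∑ zᵢ qᵢ(z)` lies in the ideal generated by the coordinates and is bounded away
from `0` on `Φ(Ω)`, by `|p(0)| - sup_{Φ(Ω)} |p|`. Hence `ψᵢ = qᵢ ∘ Φ / ((p - p(0)) ∘ Φ)` is a
bounded holomorphic solution of `∑ φᵢ ψᵢ = 1`.
-/

/-- The polynomial convex hull of a subset `S ⊆ ℂⁿ`:
`Pol(S) = { w : |p(w)| ≤ sup_{z ∈ S} |p(z)| for every polynomial p }`. -/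
noncomputable def polyHull {n : ℕ} (S : Set (Fin n → ℂ)) : Set (Fin n → ℂ) :=
  {w | ∀ p : MvPolynomial (Fin n) ℂ,
      ‖MvPolynomial.eval w p‖ ≤ sSup ((fun z => ‖MvPolynomial.eval z p‖) '' S)}

open MvPolynomial Bornology

theorem MvPolynomial.exists_sum_mul_X_eq_sub_C_constantCoeff {R σ : Type*} [CommRing R]
    [Fintype σ] (p : MvPolynomial σ R) :
    ∃ q : σ → MvPolynomial σ R, ∑ i, q i * X i = p - C (constantCoeff p) := by
  rw [← Ideal.mem_span_range_iff_exists_fun, ← pow_one (Ideal.span _),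
    mem_pow_idealOfVars_iff']
  intro x hx
  rw [Nat.lt_one_iff, Finsupp.degree_eq_zero_iff] at hx
  simp [hx, constantCoeff_eq]

theorem MvPolynomial.isBounded_image_eval {𝕜 σ : Type*} [NontriviallyNormedField 𝕜]
    [ProperSpace 𝕜] [Fintype σ] {S : Set (σ → 𝕜)} (hS : IsBounded S) (p : MvPolynomial σ 𝕜) :
    IsBounded ((fun z => eval z p) '' S) :=
  (hS.isCompact_closure.image (continuous_eval p)).isBounded.subset
    (Set.image_mono subset_closure)

theorem MvPolynomial.differentiableOn_eval_comp {𝕜 E σ : Type*} [NontriviallyNormedField 𝕜]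
    [NormedAddCommGroup E] [NormedSpace 𝕜 E] {s : Set E} {Φ : E → σ → 𝕜}
    (hΦ : ∀ i, DifferentiableOn 𝕜 (Φ · i) s) (p : MvPolynomial σ 𝕜) :
    DifferentiableOn 𝕜 (fun x => eval (Φ x) p) s := by
  induction p using MvPolynomial.induction_on with
  | C a => simp
  | add p q hp hq => simpa using hp.fun_add hq
  | mul_X p i hp => simpa using hp.fun_mul (hΦ i)

theorem exists_le_norm_sum_mul_eval_of_zero_notMem_polyHull {n : ℕ} {S : Set (Fin n → ℂ)}
    (hS : IsBounded S) (h0 : (0 : Fin n → ℂ) ∉ polyHull S) :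
    ∃ q : Fin n → MvPolynomial (Fin n) ℂ, ∃ δ > 0, ∀ z ∈ S, δ ≤ ‖∑ i, z i * eval z (q i)‖ := by
  simp only [polyHull, Set.mem_ofPred_eq, not_forall, not_le] at h0
  obtain ⟨p, hp⟩ := h0
  obtain ⟨q, hq⟩ := exists_sum_mul_X_eq_sub_C_constantCoeff p
  obtain ⟨C, hC⟩ := isBounded_iff_forall_norm_le.1 (isBounded_image_eval hS p)
  have hbdd : BddAbove ((fun z => ‖eval z p‖) '' S) :=
    ⟨C, Set.forall_mem_image.2 fun z hz => hC _ (Set.mem_image_of_mem _ hz)⟩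
  refine ⟨q, _, sub_pos.2 hp, fun z hz => ?_⟩
  have hsum : ∑ i, z i * eval z (q i) = eval z p - eval 0 p := by
    simpa [mul_comm, eval_zero] using congrArg (eval z) hq
  calc ‖eval 0 p‖ - sSup ((fun z => ‖eval z p‖) '' S)
      ≤ ‖eval 0 p‖ - ‖eval z p‖ := by gcongr; exact le_csSup hbdd (Set.mem_image_of_mem _ hz)
    _ ≤ ‖eval z p - eval 0 p‖ := by rw [norm_sub_rev]; exact norm_sub_norm_le _ _
    _ = ‖∑ i, z i * eval z (q i)‖ := by rw [hsum]

theorem exists_sum_mul_eq_one_of_le_norm_sum_mul {𝕜 E ι : Type*} [NontriviallyNormedField 𝕜]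
    [NormedAddCommGroup E] [NormedSpace 𝕜 E] [Fintype ι] {s : Set E} {φ a : ι → E → 𝕜}
    (hφ : ∀ i, DifferentiableOn 𝕜 (φ i) s) (ha : ∀ i, DifferentiableOn 𝕜 (a i) s)
    (ha_bdd : ∀ i, ∃ C : ℝ, ∀ x ∈ s, ‖a i x‖ ≤ C) {δ : ℝ} (hδ : 0 < δ)
    (hlow : ∀ x ∈ s, δ ≤ ‖∑ i, φ i x * a i x‖) :
    ∃ ψ : ι → E → 𝕜,
      (∀ i, DifferentiableOn 𝕜 (ψ i) s) ∧
      (∀ i, ∃ C : ℝ, ∀ x ∈ s, ‖ψ i x‖ ≤ C) ∧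
      ∀ x ∈ s, ∑ i, φ i x * ψ i x = 1 := by
  have hne : ∀ x ∈ s, ∑ i, φ i x * a i x ≠ 0 := fun x hx h =>
    hδ.not_ge (by simpa [h] using hlow x hx)
  have hsum : DifferentiableOn 𝕜 (fun x => ∑ i, φ i x * a i x) s :=
    DifferentiableOn.fun_sum fun i _ => (hφ i).mul (ha i)
  refine ⟨fun i x => a i x / ∑ j, φ j x * a j x, fun i => ?_, fun i => ?_, fun x hx => ?_⟩
  · simpa only [div_eq_mul_inv] using (ha i).fun_mul (hsum.fun_inv hne)
  · obtain ⟨C, hC⟩ := ha_bdd i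
    refine ⟨C / δ, fun x hx => ?_⟩
    calc ‖a i x / ∑ j, φ j x * a j x‖ ≤ ‖a i x‖ / δ := by
          rw [norm_div]; exact div_le_div_of_nonneg_left (norm_nonneg _) hδ (hlow x hx)
      _ ≤ C / δ := by gcongr; exact hC x hx
  · simp_rw [mul_div_assoc', ← Finset.sum_div]
    exact div_self (hne x hx)

theorem corona_of_zero_not_in_polyHull_general {m n : ℕ}
    (Ω : Set (Fin m → ℂ))
    (φ : Fin n → (Fin m → ℂ) → ℂ)
    (hφhol : ∀ i, DifferentiableOn ℂ (φ i) Ω)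
    (hφbdd : ∀ i, ∃ C : ℝ, ∀ ω ∈ Ω, ‖φ i ω‖ ≤ C)
    (h0 : (0 : Fin n → ℂ) ∉ polyHull ((fun ω => fun i => φ i ω) '' Ω)) :
    ∃ ψ : Fin n → (Fin m → ℂ) → ℂ,
      (∀ i, DifferentiableOn ℂ (ψ i) Ω) ∧
      (∀ i, ∃ C : ℝ, ∀ ω ∈ Ω, ‖ψ i ω‖ ≤ C) ∧
      ∀ ω ∈ Ω, ∑ i, φ i ω * ψ i ω = 1 := by
  set Φ : (Fin m → ℂ) → Fin n → ℂ := fun ω i => φ i ω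
  have hΦbdd : IsBounded (Φ '' Ω) := by
    refine forall_isBounded_image_eval_iff.1 fun i => isBounded_iff_forall_norm_le.2 ?_
    simpa [Set.image_image] using hφbdd i
  obtain ⟨q, δ, hδ, hlow⟩ := exists_le_norm_sum_mul_eval_of_zero_notMem_polyHull hΦbdd h0
  refine exists_sum_mul_eq_one_of_le_norm_sum_mul hφhol
    (fun i => differentiableOn_eval_comp hφhol (q i)) (fun i => ?_) hδ
    (fun ω hω => hlow (Φ ω) (Set.mem_image_of_mem Φ hω))
  simpa [Set.image_image] using isBounded_iff_forall_norm_le.1 (isBounded_image_eval hΦbdd (q i))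

/-- Theorem 8.2 of the paper.  If `φ₁,…,φₙ` are bounded holomorphic
functions on a nonempty open `Ω ⊆ ℂᵐ` and the origin is not in the polynomial convex hull
of the joint range `Φ(Ω)`, then the corona problem for `φ₁,…,φₙ` is solvable in `H^∞(Ω)`. -/
theorem corona_of_zero_not_in_polyHull {m n : ℕ} (hn : 1 ≤ n)
    (Ω : Set (Fin m → ℂ)) (hΩopen : IsOpen Ω) (hΩne : Ω.Nonempty)
    (φ : Fin n → (Fin m → ℂ) → ℂ)
    (hφhol : ∀ i, DifferentiableOn ℂ (φ i) Ω)
    (hφbdd : ∀ i, ∃ C : ℝ, ∀ ω ∈ Ω, ‖φ i ω‖ ≤ C)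
    (h0 : (0 : Fin n → ℂ) ∉ polyHull ((fun ω => fun i => φ i ω) '' Ω)) :
    ∃ ψ : Fin n → (Fin m → ℂ) → ℂ,
      (∀ i, DifferentiableOn ℂ (ψ i) Ω) ∧
      (∀ i, ∃ C : ℝ, ∀ ω ∈ Ω, ‖ψ i ω‖ ≤ C) ∧
      ∀ ω ∈ Ω, ∑ i, φ i ω * ψ i ω = 1 :=
  corona_of_zero_not_in_polyHull_general Ω φ hφhol hφbdd h0
end

section
/- Let X be a nonempty compact subset of ℂⁿ and let A denote the closure, in the Banach algebra C(X, ℂ) of continuous complex-valued functions on X with the supremum norm, of the subalgebra of restrictions to X of polynomial functions p ∈ ℂ[z₁,…,zₙ]. If the origin 0 ∈ ℂⁿ does not belong to the polynomial convex hull Pol(X), then there exist σ₁,…,σₙ ∈ A such that ∑_{i=1}^n zᵢ σᵢ(z₁,…,zₙ) = 1 for every (z₁,…,zₙ) ∈ X (where zᵢ denotes the i-th coordinate function restricted to X). -/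
open MvPolynomial

section BanachAlgebra

variable {A : Type*} [NormedCommRing A] [NormedAlgebra ℂ A] [CompleteSpace A] {ι : Type*}

theorem exists_algHom_forall_eq_zero_of_span_ne_top {a : ι → A}
    (h : Ideal.span (Set.range a) ≠ ⊤) : ∃ φ : A →ₐ[ℂ] ℂ, ∀ i, φ (a i) = 0 := by
  obtain ⟨M, hM, haM⟩ := Ideal.exists_le_maximal _ h
  exact ⟨WeakDual.CharacterSpace.equivAlgHom M.toCharacterSpace,
    fun i => M.toCharacterSpace_apply_eq_zero_of_mem (haM (Ideal.subset_span ⟨i, rfl⟩))⟩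

theorem norm_eval_zero_le_norm_aeval_of_span_ne_top [NormOneClass A] {a : ι → A}
    (h : Ideal.span (Set.range a) ≠ ⊤) (p : MvPolynomial ι ℂ) :
    ‖eval 0 p‖ ≤ ‖aeval a p‖ := by
  obtain ⟨φ, hφ⟩ := exists_algHom_forall_eq_zero_of_span_ne_top h
  have hφp : φ (aeval a p) = eval 0 p := by
    rw [comp_aeval_apply, show (fun i => φ (a i)) = 0 from funext hφ, aeval_eq_eval]
  exact hφp ▸ AlgHom.norm_apply_le_self φ _

end BanachAlgebra

section PolyAlgebra

variable {ι : Type*} (K : Set (ι → ℂ))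

def coordOn (i : ι) : C(K, ℂ) :=
  ⟨fun z => (z : ι → ℂ) i, (continuous_apply i).comp continuous_subtype_val⟩

noncomputable def polyRestrict : MvPolynomial ι ℂ →ₐ[ℂ] C(K, ℂ) :=
  aeval (coordOn K)

variable {K}

@[simp]
theorem polyRestrict_apply (p : MvPolynomial ι ℂ) (z : K) :
    polyRestrict K p z = eval (z : ι → ℂ) p := by
  induction p using MvPolynomial.induction_on <;> simp_all [polyRestrict, coordOn]

theorem coe_polyRestrict_range :
    ((polyRestrict K).range : Set C(K, ℂ)) =
      {f | ∃ p : MvPolynomial ι ℂ, ∀ z : K, f z = eval (z : ι → ℂ) p} := by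
  ext f
  simp only [AlgHom.coe_range, Set.mem_range, Set.mem_ofPred_eq, ContinuousMap.ext_iff,
    polyRestrict_apply, eq_comm]

variable [CompactSpace K]

theorem norm_polyRestrict (p : MvPolynomial ι ℂ) :
    ‖polyRestrict K p‖ = sSup ((fun z => ‖eval z p‖) '' K) := by
  simp [ContinuousMap.norm_eq_iSup_norm, sSup_image']

variable (K)

noncomputable abbrev polyAlgebra : Subalgebra ℂ C(K, ℂ) :=
  (polyRestrict K).range.topologicalClosure

instance : CompleteSpace (polyAlgebra K) :=
  (Subalgebra.isClosed_topologicalClosure _).completeSpace_coe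

-- Stated explicitly: instance search does not find this one within the heartbeat limit.
instance [Nonempty K] : NormOneClass (polyAlgebra K) :=
  SubringClass.toNormOneClass _

def polyAlgebraCoord (i : ι) : polyAlgebra K :=
  ⟨coordOn K i, Subalgebra.le_topologicalClosure _ ⟨X i, aeval_X _ i⟩⟩

variable {K}

theorem coe_aeval_polyAlgebraCoord (p : MvPolynomial ι ℂ) :
    (aeval (polyAlgebraCoord K) p : C(K, ℂ)) = polyRestrict K p :=
  comp_aeval_apply (f := polyAlgebraCoord K) (polyAlgebra K).val p

end PolyAlgebra

theorem span_polyAlgebraCoord_eq_top {n : ℕ} {K : Set (Fin n → ℂ)} [Nonempty K] [CompactSpace K]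
    (h0 : 0 ∉ polyHull K) : Ideal.span (Set.range (polyAlgebraCoord K)) = ⊤ := by
  by_contra h
  refine h0 fun p => ?_
  calc ‖eval 0 p‖ ≤ ‖aeval (polyAlgebraCoord K) p‖ :=
        norm_eval_zero_le_norm_aeval_of_span_ne_top h p
    _ = ‖polyRestrict K p‖ := by rw [← coe_aeval_polyAlgebraCoord]; rfl
    _ = sSup ((fun z => ‖eval z p‖) '' K) := norm_polyRestrict p

/-- key step in Theorem 8.2.  Let `K ⊆ ℂⁿ` be a nonempty compact set and
`A` the closure in `C(K, ℂ)` of the restrictions of polynomials.  If `0 ∉ Pol(K)`, then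
there exist `σ₁,…,σₙ ∈ A` with `∑ zᵢ σᵢ(z) = 1` on `K`. -/
theorem coordinate_ideal_contains_one {n : ℕ} (K : Set (Fin n → ℂ))
    [Nonempty K] [CompactSpace K]
    (h0 : (0 : Fin n → ℂ) ∉ polyHull K) :
    ∃ σ : Fin n → C(K, ℂ),
      (∀ i, σ i ∈ closure {f : C(K, ℂ) |
          ∃ p : MvPolynomial (Fin n) ℂ, ∀ z : K, f z = MvPolynomial.eval (z : Fin n → ℂ) p}) ∧
      ∀ z : K, ∑ i, (z : Fin n → ℂ) i * σ i z = 1 := by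
  have hone : (1 : polyAlgebra K) ∈ Ideal.span (Set.range (polyAlgebraCoord K)) := by
    rw [span_polyAlgebraCoord_eq_top h0]
    exact Submodule.mem_top
  obtain ⟨σ, hσ⟩ := Ideal.mem_span_range_iff_exists_fun.mp hone
  refine ⟨fun i => σ i, fun i => ?_, fun z => ?_⟩
  · rw [← coe_polyRestrict_range, ← Subalgebra.topologicalClosure_coe]
    exact (σ i).2
  · have hσz := congrArg (fun f : polyAlgebra K => (f : C(K, ℂ)) z) hσ
    simpa [polyAlgebraCoord, coordOn, mul_comm] using hσz
end

section
/- Let Ω be a nonempty open subset of ℂᵐ, let n ≥ 1, and let φ₁,…,φₙ : Ω → ℂ be bounded holomorphic functions; write Φ(ω) = (φ₁(ω),…,φₙ(ω)) ∈ ℂⁿ. If there exists a polynomial p ∈ ℂ[z₁,…,zₙ] and a constant c with |p(Φ(ω))| ≤ c for all ω ∈ Ω and c < |p(0)|, then there exist bounded holomorphic functions ψ₁,…,ψₙ : Ω → ℂ such that ∑_{i=1}^n φᵢ(ω)ψᵢ(ω) = 1 for every ω ∈ Ω. -/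
/-!
Write `p(z) - p(0) = ∑ zᵢ qᵢ(z)`, which is possible because `p - p(0)` lies in the ideal
generated by the variables. Along `Φ`, the function `h = p ∘ Φ - p(0)` is holomorphic with
`|h| ≥ |p(0)| - c > 0` on `Ω`, while each `qᵢ ∘ Φ` is holomorphic and bounded (a polynomial is
bounded on the compact closure of the bounded set `Φ(Ω)`). Hence `ψᵢ = qᵢ ∘ Φ / h` are bounded
holomorphic and `∑ φᵢ ψᵢ = h / h = 1`.
-/

open MvPolynomial

namespace MvPolynomial

theorem sub_C_constantCoeff_mem_idealOfVars {σ R : Type*} [CommRing R] (p : MvPolynomial σ R) :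
    p - C (constantCoeff p) ∈ idealOfVars σ R := by
  rw [← pow_one (idealOfVars σ R), mem_pow_idealOfVars_iff']
  intro x hx
  obtain rfl : x = 0 := (Finsupp.degree_eq_zero_iff x).1 (by simpa using hx)
  simp [constantCoeff_eq]

theorem exists_sum_mul_X_eq_sub_C_constantCoeff_s12 {σ R : Type*} [Fintype σ] [CommRing R]
    (p : MvPolynomial σ R) :
    ∃ q : σ → MvPolynomial σ R, ∑ i, q i * X i = p - C (constantCoeff p) :=
  Ideal.mem_span_range_iff_exists_fun.1 p.sub_C_constantCoeff_mem_idealOfVars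

theorem differentiableOn_eval_comp_s12 {𝕜 E σ : Type*} [NontriviallyNormedField 𝕜]
    [NormedAddCommGroup E] [NormedSpace 𝕜 E] {s : Set E} {f : σ → E → 𝕜}
    (hf : ∀ i, DifferentiableOn 𝕜 (f i) s) (q : MvPolynomial σ 𝕜) :
    DifferentiableOn 𝕜 (fun x => eval (fun i => f i x) q) s := by
  induction q using MvPolynomial.induction_on with
  | C a => simp
  | add p q hp hq => simp only [map_add]; exact hp.add hq
  | mul_X p i hp => simp only [map_mul, eval_X]; exact hp.mul (hf i)

theorem exists_norm_eval_comp_le {R σ α : Type*} [NormedCommRing R] [ProperSpace R] [Fintype σ]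
    {s : Set α} {f : σ → α → R} (hf : ∀ i, ∃ C : ℝ, ∀ x ∈ s, ‖f i x‖ ≤ C)
    (q : MvPolynomial σ R) :
    ∃ C : ℝ, ∀ x ∈ s, ‖eval (fun i => f i x) q‖ ≤ C := by
  have hbdd : Bornology.IsBounded ((fun x i => f i x) '' s) := by
    refine Bornology.forall_isBounded_image_eval_iff.1 fun i => ?_
    rw [Set.image_image]
    exact isBounded_iff_forall_norm_le.2 (by simpa using hf i)
  obtain ⟨C, hC⟩ := isBounded_iff_forall_norm_le.1
    ((hbdd.isCompact_closure.image (continuous_eval q)).isBounded.subset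
      (Set.image_mono subset_closure))
  exact ⟨C, fun x hx => hC _ ⟨_, ⟨x, hx, rfl⟩, rfl⟩⟩

end MvPolynomial

theorem exists_sum_mul_eq_one_of_sum_mul_eq {𝕜 E ι : Type*} [NontriviallyNormedField 𝕜]
    [NormedAddCommGroup E] [NormedSpace 𝕜 E] [Fintype ι] {s : Set E} {φ g : ι → E → 𝕜}
    {h : E → 𝕜} {δ : ℝ} (hδ : 0 < δ)
    (hg_diff : ∀ i, DifferentiableOn 𝕜 (g i) s) (hg_bdd : ∀ i, ∃ C : ℝ, ∀ x ∈ s, ‖g i x‖ ≤ C)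
    (hh_diff : DifferentiableOn 𝕜 h s) (hh_ge : ∀ x ∈ s, δ ≤ ‖h x‖)
    (hsum : ∀ x ∈ s, ∑ i, φ i x * g i x = h x) :
    ∃ ψ : ι → E → 𝕜,
      (∀ i, DifferentiableOn 𝕜 (ψ i) s) ∧
      (∀ i, ∃ C : ℝ, ∀ x ∈ s, ‖ψ i x‖ ≤ C) ∧
      ∀ x ∈ s, ∑ i, φ i x * ψ i x = 1 := by
  have hh_ne : ∀ x ∈ s, h x ≠ 0 := fun x hx => norm_pos_iff.1 (hδ.trans_le (hh_ge x hx))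
  refine ⟨fun i x => g i x / h x, fun i => ?_, fun i => ?_, fun x hx => ?_⟩
  · simp only [div_eq_mul_inv]
    exact (hg_diff i).mul (hh_diff.inv hh_ne)
  · obtain ⟨C, hC⟩ := hg_bdd i
    refine ⟨C / δ, fun x hx => ?_⟩
    rw [norm_div]
    exact div_le_div₀ ((norm_nonneg _).trans (hC x hx)) (hC x hx) hδ (hh_ge x hx)
  · simp only [← mul_div_assoc, ← Finset.sum_div, hsum x hx, div_self (hh_ne x hx)]

theorem corona_of_polynomial_certificate_general {m n : ℕ}
    (Ω : Set (Fin m → ℂ))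
    (φ : Fin n → (Fin m → ℂ) → ℂ)
    (hφhol : ∀ i, DifferentiableOn ℂ (φ i) Ω)
    (hφbdd : ∀ i, ∃ C : ℝ, ∀ ω ∈ Ω, ‖φ i ω‖ ≤ C)
    (p : MvPolynomial (Fin n) ℂ) (c : ℝ)
    (hpc : ∀ ω ∈ Ω, ‖MvPolynomial.eval (fun i => φ i ω) p‖ ≤ c)
    (hc : c < ‖MvPolynomial.eval (0 : Fin n → ℂ) p‖) :
    ∃ ψ : Fin n → (Fin m → ℂ) → ℂ,
      (∀ i, DifferentiableOn ℂ (ψ i) Ω) ∧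
      (∀ i, ∃ C : ℝ, ∀ ω ∈ Ω, ‖ψ i ω‖ ≤ C) ∧
      ∀ ω ∈ Ω, ∑ i, φ i ω * ψ i ω = 1 := by
  obtain ⟨q, hq⟩ := p.exists_sum_mul_X_eq_sub_C_constantCoeff_s12
  refine exists_sum_mul_eq_one_of_sum_mul_eq (g := fun i ω => eval (fun j => φ j ω) (q i))
    (h := fun ω => eval (fun j => φ j ω) p - eval 0 p) (sub_pos.2 hc)
    (fun i => differentiableOn_eval_comp_s12 hφhol (q i))
    (fun i => exists_norm_eval_comp_le hφbdd (q i))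
    ((differentiableOn_eval_comp_s12 hφhol p).sub_const _) (fun ω hω => ?_) (fun ω _ => ?_)
  · have h_rev := norm_sub_norm_le (eval 0 p) (eval (fun j => φ j ω) p)
    rw [norm_sub_rev] at h_rev
    linarith [hpc ω hω]
  · simpa [eval_zero, mul_comm] using congrArg (eval fun j => φ j ω) hq

/-- Corollary 8.5 of the paper.  If a single polynomial `p` satisfies
`|p(Φ(ω))| ≤ c < |p(0)|` for all `ω ∈ Ω`, then the corona problem for the bounded
holomorphic data `φ₁,…,φₙ` on `Ω` has an affirmative solution. -/
theorem corona_of_polynomial_certificate {m n : ℕ} (hn : 1 ≤ n)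
    (Ω : Set (Fin m → ℂ)) (hΩopen : IsOpen Ω) (hΩne : Ω.Nonempty)
    (φ : Fin n → (Fin m → ℂ) → ℂ)
    (hφhol : ∀ i, DifferentiableOn ℂ (φ i) Ω)
    (hφbdd : ∀ i, ∃ C : ℝ, ∀ ω ∈ Ω, ‖φ i ω‖ ≤ C)
    (p : MvPolynomial (Fin n) ℂ) (c : ℝ)
    (hpc : ∀ ω ∈ Ω, ‖MvPolynomial.eval (fun i => φ i ω) p‖ ≤ c)
    (hc : c < ‖MvPolynomial.eval (0 : Fin n → ℂ) p‖) :
    ∃ ψ : Fin n → (Fin m → ℂ) → ℂ,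
      (∀ i, DifferentiableOn ℂ (ψ i) Ω) ∧
      (∀ i, ∃ C : ℝ, ∀ ω ∈ Ω, ‖ψ i ω‖ ≤ C) ∧
      ∀ ω ∈ Ω, ∑ i, φ i ω * ψ i ω = 1 :=
  corona_of_polynomial_certificate_general Ω φ hφhol hφbdd p c hpc hc
end
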